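/- Let D ⊆ ℂ be a domain and φ : D → [0,∞) be of finite mean oscillation at a point z₀ ∈ D. Then there exists ε₀ ∈ (0, min(e^{-e}, d₀)), where d₀ = sup_{z∈D} |z−z₀|, such that ∫_{ε<|z−z₀|<ε₀} φ(z) / (|z−z₀| log(1/|z−z₀|))² dm(z) = O(log log(1/ε)) as ε → 0. -/

import Mathlib

open MeasureTheory Metric Filter Set
open scoped ENNReal Topology

/-- `φ` has finite mean oscillation at `z₀`. -/
def FMOAt (φ : ℂ → ℝ) (z₀ : ℂ) : Prop :=
  ∃ C : ℝ, ∀ᶠ ε in 𝓝[>] (0 : ℝ),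
    (⨍ z in ball z₀ ε, |φ z - ⨍ w in ball z₀ ε, φ w ∂volume| ∂volume) ≤ C

/-!
Halving the radius of a ball changes the average of `φ` by at most four times its mean
oscillation, so finite mean oscillation makes the averages `A_k` of `φ` over the dyadic balls
`B(z₀, ε₀ 2⁻ᵏ)` grow at most linearly in `k`. On the dyadic annulus
`ε₀ 2⁻ᵏ⁻¹ ≤ |z - z₀| < ε₀ 2⁻ᵏ` the weight `(|z - z₀| log (1 / |z - z₀|))⁻²` is
`O(4ᵏ / (ε₀ k)²)`, while `∫ φ` over the ball is `π ε₀² 4⁻ᵏ A_k`; hence the annulus contributes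
`O(1 / k)`. The region `ε < |z - z₀| < ε₀` is covered by `O(log (1 / ε))` dyadic annuli, and the
harmonic sum gives `O(log log (1 / ε))`.
-/

open Real

section SetAverage

variable {α : Type*} [MeasurableSpace α] {μ : Measure α}

theorem measureReal_mul_abs_setAverage_sub_le {s t : Set α} {f : α → ℝ}
    (hst : s ⊆ t) (ht : μ t ≠ ∞) (hf : IntegrableOn f t μ) :
    μ.real s * |⨍ x in s, f x ∂μ - ⨍ x in t, f x ∂μ| ≤
      μ.real t * ⨍ x in t, |f x - ⨍ y in t, f y ∂μ| ∂μ := by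
  set c := ⨍ y in t, f y ∂μ
  have hs : μ s ≠ ∞ := (measure_lt_top_of_subset hst ht).ne
  calc μ.real s * |⨍ x in s, f x ∂μ - c|
      = |∫ x in s, (f x - c) ∂μ| := by
        rw [integral_sub (hf.mono_set hst) (integrableOn_const hs), setIntegral_const,
          ← measure_smul_setAverage _ hs, smul_eq_mul, smul_eq_mul, ← mul_sub, abs_mul,
          abs_of_nonneg measureReal_nonneg]
    _ ≤ ∫ x in s, |f x - c| ∂μ := abs_integral_le_integral_abs
    _ ≤ ∫ x in t, |f x - c| ∂μ :=
        setIntegral_mono_set (hf.sub (integrableOn_const ht)).abs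
          (ae_of_all _ fun _ => abs_nonneg _) hst.eventuallyLE
    _ = μ.real t * ⨍ x in t, |f x - c| ∂μ := (measure_smul_setAverage _ ht).symm

theorem setAverage_nonneg {s : Set α} {f : α → ℝ} (hs : MeasurableSet s)
    (hf : ∀ x ∈ s, 0 ≤ f x) : 0 ≤ ⨍ x in s, f x ∂μ := by
  rw [setAverage_eq]
  exact smul_nonneg (inv_nonneg.2 measureReal_nonneg) (setIntegral_nonneg hs hf)

theorem lintegral_biUnion_finset_le {ι : Type*} (s : Finset ι) (t : ι → Set α) (f : α → ℝ≥0∞) :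
    ∫⁻ x in ⋃ i ∈ s, t i, f x ∂μ ≤ ∑ i ∈ s, ∫⁻ x in t i, f x ∂μ := by
  rw [← Finset.set_biUnion_coe, biUnion_eq_iUnion, ← Finset.tsum_subtype]
  exact lintegral_iUnion_le _ f

end SetAverage

theorem Set.diff_subset_biUnion_range_diff {α : Type*} (B : ℕ → Set α) (K : ℕ) :
    B 0 \ B (K + 1) ⊆ ⋃ k ∈ Finset.range (K + 1), B k \ B (k + 1) := by
  induction K with
  | zero => simp
  | succ K ih =>
    rintro x ⟨hx0, hxK⟩
    rw [Finset.range_add_one, Finset.set_biUnion_insert]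
    by_cases hx : x ∈ B (K + 1)
    · exact Or.inl ⟨hx, hxK⟩
    · exact Or.inr (ih ⟨hx0, hx⟩)

theorem ofReal_lt_biSup_edist {E : Type*} [NormedAddCommGroup E] [NormedSpace ℝ E] [Nontrivial E]
    {D : Set E} {z₀ : E} {r s : ℝ} (hs : 0 ≤ s) (hsr : s < r) (hD : ball z₀ r ⊆ D) :
    ENNReal.ofReal s < ⨆ z ∈ D, edist z z₀ := by
  obtain ⟨x, hx⟩ := exists_norm_eq E (by linarith : 0 ≤ (s + r) / 2)
  have hz : z₀ + x ∈ D := hD (by rw [mem_ball, dist_eq_norm, add_sub_cancel_left, hx]; linarith)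
  calc ENNReal.ofReal s < ENNReal.ofReal ((s + r) / 2) :=
        (ENNReal.ofReal_lt_ofReal_iff (by linarith)).2 (by linarith)
    _ = edist (z₀ + x) z₀ := by rw [edist_dist, dist_eq_norm, add_sub_cancel_left, hx]
    _ ≤ ⨆ z ∈ D, edist z z₀ := le_biSup (fun z => edist z z₀) hz

theorem le_two_pow_ceil_logb {x : ℝ} (hx : 0 < x) : x ≤ 2 ^ ⌈logb 2 x⌉₊ := by
  calc x = 2 ^ logb 2 x := (rpow_logb two_pos (by norm_num) hx).symm
    _ ≤ 2 ^ (⌈logb 2 x⌉₊ : ℝ) := rpow_le_rpow_of_exponent_le one_le_two (Nat.le_ceil _)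
    _ = 2 ^ ⌈logb 2 x⌉₊ := rpow_natCast _ _

theorem harmonic_ceil_logb_le {x : ℝ} (hx : exp (exp 1) ≤ x) :
    (harmonic (⌈logb 2 x⌉₊ + 1) : ℝ) ≤ 5 * log (log x) := by
  have hlog : exp 1 ≤ log x := by
    rwa [le_log_iff_exp_le (lt_of_lt_of_le (exp_pos _) hx)]
  have hloglog : 1 ≤ log (log x) := by
    rwa [le_log_iff_exp_le (lt_of_lt_of_le (exp_pos _) hlog)]
  have hlog1 : 1 ≤ log x := le_trans (by linarith [add_one_le_exp (1 : ℝ)]) hlog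
  have hx1 : 1 ≤ x := (one_le_exp (exp_pos 1).le).trans hx
  have hK : (⌈logb 2 x⌉₊ : ℝ) + 1 ≤ 4 * log x := by
    have hceil := Nat.ceil_lt_add_one (logb_nonneg one_lt_two hx1)
    have hlogb : logb 2 x ≤ 2 * log x := by
      rw [logb, div_le_iff₀ (log_pos one_lt_two)]
      nlinarith [log_two_gt_d9]
    linarith
  have h4 : log 4 ≤ 3 := by linarith [log_le_sub_one_of_pos (by norm_num : (0 : ℝ) < 4)]
  calc (harmonic (⌈logb 2 x⌉₊ + 1) : ℝ) ≤ 1 + log ((⌈logb 2 x⌉₊ : ℝ) + 1) := by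
        exact_mod_cast harmonic_le_one_add_log _
    _ ≤ 1 + log (4 * log x) := by gcongr
    _ = 1 + log 4 + log (log x) := by rw [log_mul (by norm_num) (by linarith)]; ring
    _ ≤ 5 * log (log x) := by linarith

theorem mul_log_two_le_log_one_div_div_two_pow {ρ : ℝ} (hρ : 0 < ρ) (hρ2 : ρ ≤ 1 / 2) (k : ℕ) :
    (k + 1) * log 2 ≤ log (1 / (ρ / 2 ^ k)) := by
  have h : (2 : ℝ) ^ (k + 1) ≤ 1 / (ρ / 2 ^ k) := by
    rw [one_div_div, le_div_iff₀ hρ, pow_succ]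
    nlinarith [pow_pos (two_pos : (0 : ℝ) < 2) k]
  calc (k + 1) * log 2 = log (2 ^ (k + 1)) := by rw [log_pow]; push_cast; ring
    _ ≤ log (1 / (ρ / 2 ^ k)) := log_le_log (by positivity) h

theorem Complex.measureReal_ball (z : ℂ) {ρ : ℝ} (hρ : 0 ≤ ρ) :
    volume.real (ball z ρ) = π * ρ ^ 2 := by
  rw [measureReal_def, Complex.volume_ball, ← ENNReal.ofReal_pow hρ, ENNReal.toReal_mul,
    ENNReal.toReal_ofReal (by positivity), mul_comm]
  rfl

section Ball

variable {f : ℂ → ℝ} {z : ℂ} {ρ C : ℝ}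

noncomputable def meanOscillation (f : ℂ → ℝ) (z : ℂ) (r : ℝ) : ℝ :=
  ⨍ w in ball z r, |f w - ⨍ v in ball z r, f v|

theorem meanOscillation_nonneg (f : ℂ → ℝ) (z : ℂ) (r : ℝ) : 0 ≤ meanOscillation f z r :=
  setAverage_nonneg measurableSet_ball fun _ _ => abs_nonneg _

theorem setAverage_ball_half_le (hρ : 0 < ρ) (hf : IntegrableOn f (ball z ρ)) :
    ⨍ w in ball z (ρ / 2), f w ≤ (⨍ w in ball z ρ, f w) + 4 * meanOscillation f z ρ := by
  have h : volume.real (ball z (ρ / 2)) * |(⨍ w in ball z (ρ / 2), f w) - ⨍ w in ball z ρ, f w|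
      ≤ volume.real (ball z ρ) * meanOscillation f z ρ :=
    measureReal_mul_abs_setAverage_sub_le (ball_subset_ball (half_le_self hρ.le))
      measure_ball_lt_top.ne hf
  rw [Complex.measureReal_ball z (half_pos hρ).le, Complex.measureReal_ball z hρ.le] at h
  have hπ := pi_pos
  have hdiff : |(⨍ w in ball z (ρ / 2), f w) - ⨍ w in ball z ρ, f w| ≤
      4 * meanOscillation f z ρ := by
    refine le_of_mul_le_mul_left ?_ (by positivity : 0 < π * (ρ / 2) ^ 2)
    linarith
  linarith [le_abs_self ((⨍ w in ball z (ρ / 2), f w) - ⨍ w in ball z ρ, f w)]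

theorem setAverage_ball_div_two_pow_le (hρ : 0 < ρ) (hf : IntegrableOn f (ball z ρ))
    (hosc : ∀ r ∈ Ioc 0 ρ, meanOscillation f z r ≤ C) (k : ℕ) :
    ⨍ w in ball z (ρ / 2 ^ k), f w ≤ (⨍ w in ball z ρ, f w) + 4 * C * k := by
  induction k with
  | zero => simp
  | succ k ih =>
    have hρk : ρ / 2 ^ k ∈ Ioc 0 ρ :=
      ⟨by positivity, div_le_self hρ.le (one_le_pow₀ one_le_two)⟩
    have hstep := setAverage_ball_half_le hρk.1 (hf.mono_set (ball_subset_ball hρk.2))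
    rw [div_div, ← pow_succ] at hstep
    push_cast
    linarith [hosc _ hρk]

theorem lintegral_ball_diff_ball_half_le (hρ : 0 < ρ) (hρ1 : ρ < 1)
    (hf : IntegrableOn f (ball z ρ)) (hf0 : ∀ w ∈ ball z ρ, 0 ≤ f w) :
    ∫⁻ w in ball z ρ \ ball z (ρ / 2), ENNReal.ofReal (f w / (dist w z * log (1 / dist w z)) ^ 2)
      ≤ ENNReal.ofReal (4 * π * (⨍ w in ball z ρ, f w) / log (1 / ρ) ^ 2) := by
  have hL : 0 < log (1 / ρ) := log_pos (by rw [one_div]; exact one_lt_inv₀ hρ |>.2 hρ1)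
  set c := ((ρ / 2 * log (1 / ρ)) ^ 2)⁻¹
  have hpt : ∀ w ∈ ball z ρ \ ball z (ρ / 2),
      ENNReal.ofReal (f w / (dist w z * log (1 / dist w z)) ^ 2) ≤ ENNReal.ofReal (c * f w) := by
    rintro w ⟨hwρ, hw2⟩
    rw [mem_ball] at hwρ
    rw [mem_ball, not_lt] at hw2
    have hd : 0 < dist w z := (half_pos hρ).trans_le hw2
    have hLd : log (1 / ρ) ≤ log (1 / dist w z) := log_le_log (by positivity) (by gcongr)
    rw [mul_comm c, ← div_eq_mul_inv]
    gcongr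
    · exact hf0 w hwρ
  calc ∫⁻ w in ball z ρ \ ball z (ρ / 2), ENNReal.ofReal (f w / (dist w z * log (1 / dist w z)) ^ 2)
      ≤ ∫⁻ w in ball z ρ \ ball z (ρ / 2), ENNReal.ofReal (c * f w) :=
        setLIntegral_mono' (measurableSet_ball.diff measurableSet_ball) hpt
    _ ≤ ∫⁻ w in ball z ρ, ENNReal.ofReal (c * f w) := lintegral_mono_set sdiff_subset
    _ = ENNReal.ofReal (∫ w in ball z ρ, c * f w) :=
        (ofReal_integral_eq_lintegral_ofReal (hf.const_mul c)
          ((ae_restrict_mem measurableSet_ball).mono fun w hw =>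
            mul_nonneg (by positivity) (hf0 w hw))).symm
    _ = ENNReal.ofReal (4 * π * (⨍ w in ball z ρ, f w) / log (1 / ρ) ^ 2) := by
        rw [integral_const_mul, ← measure_smul_setAverage _ measure_ball_lt_top.ne,
          Complex.measureReal_ball z hρ.le, smul_eq_mul]
        congr 1
        simp only [c]
        field_simp
        ring

theorem lintegral_dyadic_annulus_le (hρ : 0 < ρ) (hρ2 : ρ ≤ 1 / 2)
    (hf : IntegrableOn f (ball z ρ)) (hf0 : ∀ w ∈ ball z ρ, 0 ≤ f w)
    (hosc : ∀ r ∈ Ioc 0 ρ, meanOscillation f z r ≤ C) (k : ℕ) :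
    ∫⁻ w in ball z (ρ / 2 ^ k) \ ball z (ρ / 2 ^ (k + 1)),
        ENNReal.ofReal (f w / (dist w z * log (1 / dist w z)) ^ 2)
      ≤ ENNReal.ofReal (4 * π * ((⨍ w in ball z ρ, f w) + 4 * C) / log 2 ^ 2 / (k + 1)) := by
  have hρk : ρ / 2 ^ k ∈ Ioc 0 ρ := ⟨by positivity, div_le_self hρ.le (one_le_pow₀ one_le_two)⟩
  have hA0 : 0 ≤ ⨍ w in ball z ρ, f w := setAverage_nonneg measurableSet_ball hf0
  have hC : 0 ≤ C := (meanOscillation_nonneg f z ρ).trans (hosc ρ ⟨hρ, le_rfl⟩)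
  have hAk : ⨍ w in ball z (ρ / 2 ^ k), f w ≤ ((⨍ w in ball z ρ, f w) + 4 * C) * (k + 1) := by
    nlinarith [setAverage_ball_div_two_pow_le hρ hf hosc k, (Nat.cast_nonneg k : (0 : ℝ) ≤ k)]
  have hL := mul_log_two_le_log_one_div_div_two_pow hρ hρ2 k
  have hlog2 := log_pos one_lt_two
  rw [pow_succ, ← div_div]
  refine (lintegral_ball_diff_ball_half_le hρk.1 (by linarith [hρk.2])
    (hf.mono_set (ball_subset_ball hρk.2))
    fun w hw => hf0 w (ball_subset_ball hρk.2 hw)).trans (ENNReal.ofReal_le_ofReal ?_)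
  calc 4 * π * (⨍ w in ball z (ρ / 2 ^ k), f w) / log (1 / (ρ / 2 ^ k)) ^ 2
      ≤ 4 * π * (((⨍ w in ball z ρ, f w) + 4 * C) * (k + 1)) / ((k + 1) * log 2) ^ 2 := by
        gcongr
    _ = 4 * π * ((⨍ w in ball z ρ, f w) + 4 * C) / log 2 ^ 2 / (k + 1) := by
        field_simp

theorem lintegral_ball_diff_ball_div_two_pow_le (hρ : 0 < ρ) (hρ2 : ρ ≤ 1 / 2)
    (hf : IntegrableOn f (ball z ρ)) (hf0 : ∀ w ∈ ball z ρ, 0 ≤ f w)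
    (hosc : ∀ r ∈ Ioc 0 ρ, meanOscillation f z r ≤ C) (K : ℕ) :
    ∫⁻ w in ball z ρ \ ball z (ρ / 2 ^ (K + 1)),
        ENNReal.ofReal (f w / (dist w z * log (1 / dist w z)) ^ 2)
      ≤ ENNReal.ofReal
          (4 * π * ((⨍ w in ball z ρ, f w) + 4 * C) / log 2 ^ 2 * harmonic (K + 1)) := by
  set b := 4 * π * ((⨍ w in ball z ρ, f w) + 4 * C) / log 2 ^ 2
  have hb : 0 ≤ b := by
    have hA0 : 0 ≤ ⨍ w in ball z ρ, f w := setAverage_nonneg measurableSet_ball hf0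
    have hC : 0 ≤ C := (meanOscillation_nonneg f z ρ).trans (hosc ρ ⟨hρ, le_rfl⟩)
    positivity
  have hcover := diff_subset_biUnion_range_diff (fun k => ball z (ρ / 2 ^ k)) K
  simp only [pow_zero, div_one] at hcover
  calc _ ≤ ∫⁻ w in ⋃ k ∈ Finset.range (K + 1), ball z (ρ / 2 ^ k) \ ball z (ρ / 2 ^ (k + 1)),
          ENNReal.ofReal (f w / (dist w z * log (1 / dist w z)) ^ 2) := lintegral_mono_set hcover
    _ ≤ ∑ k ∈ Finset.range (K + 1), ∫⁻ w in ball z (ρ / 2 ^ k) \ ball z (ρ / 2 ^ (k + 1)),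
          ENNReal.ofReal (f w / (dist w z * log (1 / dist w z)) ^ 2) :=
        lintegral_biUnion_finset_le _ _ _
    _ ≤ ∑ k ∈ Finset.range (K + 1), ENNReal.ofReal (b / (k + 1)) :=
        Finset.sum_le_sum fun k _ => lintegral_dyadic_annulus_le hρ hρ2 hf hf0 hosc k
    _ = ENNReal.ofReal (b * harmonic (K + 1)) := by
        rw [← ENNReal.ofReal_sum_of_nonneg fun k _ => by positivity]
        simp [harmonic, Finset.mul_sum, div_eq_mul_inv]

theorem exists_lintegral_annulus_le_mul_log_log (hρ : 0 < ρ) (hρ2 : ρ ≤ 1 / 2)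
    (hf : IntegrableOn f (ball z ρ)) (hf0 : ∀ w ∈ ball z ρ, 0 ≤ f w)
    (hosc : ∀ r ∈ Ioc 0 ρ, meanOscillation f z r ≤ C) :
    ∃ C' : ℝ, ∀ ε ∈ Ioo 0 (exp (-exp 1)),
      ∫⁻ w in {w | ε < dist w z ∧ dist w z < ρ},
          ENNReal.ofReal (f w / (dist w z * log (1 / dist w z)) ^ 2)
        ≤ ENNReal.ofReal (C' * log (log (1 / ε))) := by
  set b := 4 * π * ((⨍ w in ball z ρ, f w) + 4 * C) / log 2 ^ 2
  refine ⟨5 * b, fun ε ⟨hε, hεe⟩ => ?_⟩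
  have hb : 0 ≤ b := by
    have hA0 : 0 ≤ ⨍ w in ball z ρ, f w := setAverage_nonneg measurableSet_ball hf0
    have hC : 0 ≤ C := (meanOscillation_nonneg f z ρ).trans (hosc ρ ⟨hρ, le_rfl⟩)
    positivity
  have hx : exp (exp 1) ≤ 1 / ε := by
    rw [le_div_iff₀ hε]
    calc exp (exp 1) * ε ≤ exp (exp 1) * exp (-exp 1) := by gcongr
      _ = 1 := by rw [← exp_add, add_neg_cancel, exp_zero]
  set K := ⌈logb 2 (1 / ε)⌉₊
  have hK : ρ / 2 ^ (K + 1) ≤ ε := by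
    have h := le_two_pow_ceil_logb (one_div_pos.2 hε)
    rw [div_le_iff₀ hε] at h
    rw [div_le_iff₀ (by positivity), pow_succ]
    nlinarith
  have hsub : {w | ε < dist w z ∧ dist w z < ρ} ⊆ ball z ρ \ ball z (ρ / 2 ^ (K + 1)) :=
    fun w ⟨h1, h2⟩ => ⟨h2, by rw [mem_ball, not_lt]; linarith⟩
  refine (lintegral_mono_set hsub).trans
    ((lintegral_ball_diff_ball_div_two_pow_le hρ hρ2 hf hf0 hosc K).trans
      (ENNReal.ofReal_le_ofReal ?_))
  linarith [mul_le_mul_of_nonneg_left (harmonic_ceil_logb_le hx) hb]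

end Ball

theorem fmo_integral_estimate_general
    (D : Set ℂ) (hD : IsOpen D)
    (φ : ℂ → ℝ) (hφpos : ∀ z ∈ D, 0 ≤ φ z)
    (z₀ : ℂ) (hz₀ : z₀ ∈ D)
    (hint : ∃ r > 0, IntegrableOn φ (ball z₀ r) volume)
    (hfmo : FMOAt φ z₀) :
    ∃ ε₀ : ℝ, 0 < ε₀ ∧
      ENNReal.ofReal ε₀ <
        min (ENNReal.ofReal (Real.exp (-Real.exp 1))) (⨆ z ∈ D, edist z z₀) ∧
      ∃ C : ℝ, ∀ᶠ ε in 𝓝[>] (0 : ℝ),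
        (∫⁻ z in D ∩ {z : ℂ | ε < dist z z₀ ∧ dist z z₀ < ε₀},
            ENNReal.ofReal (φ z / (dist z z₀ * Real.log (1 / dist z z₀)) ^ 2)
            ∂volume)
          ≤ ENNReal.ofReal (C * Real.log (Real.log (1 / ε))) := by
  obtain ⟨r, hr, hint⟩ := hint
  obtain ⟨r₁, hr₁, hr₁D⟩ := isOpen_iff.1 hD z₀ hz₀
  obtain ⟨C, hC⟩ := hfmo
  obtain ⟨δ, hδ, hδC⟩ := mem_nhdsGT_iff_exists_Ioo_subset.1 hC
  obtain ⟨ε₀, hε₀, hε₀lt⟩ :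
      (Ioo 0 (min (min r r₁) (min δ (min (exp (-exp 1)) (1 / 2))))).Nonempty :=
    nonempty_Ioo.2 (by simp only [lt_min_iff]; exact ⟨⟨hr, hr₁⟩, hδ, exp_pos _, one_half_pos⟩)
  simp only [lt_min_iff] at hε₀lt
  obtain ⟨⟨hε₀r, hε₀r₁⟩, hε₀δ, hε₀e, hε₀2⟩ := hε₀lt
  have hballD : ball z₀ ε₀ ⊆ D := (ball_subset_ball hε₀r₁.le).trans hr₁D
  obtain ⟨C', hC'⟩ := exists_lintegral_annulus_le_mul_log_log hε₀ hε₀2.le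
    (hint.mono_set (ball_subset_ball hε₀r.le)) (fun w hw => hφpos w (hballD hw))
    (fun ρ hρ => hδC ⟨hρ.1, hρ.2.trans_lt hε₀δ⟩)
  refine ⟨ε₀, hε₀, lt_min ((ENNReal.ofReal_lt_ofReal_iff (exp_pos _)).2 hε₀e)
    (ofReal_lt_biSup_edist hε₀.le hε₀r₁ hr₁D), C', ?_⟩
  filter_upwards [Ioo_mem_nhdsGT (exp_pos (-exp 1))] with ε hε
  exact (lintegral_mono_set inter_subset_right).trans (hC' ε hε)

/-- Lemma 6.1: if `φ ≥ 0` is of finite mean oscillation at `z₀ ∈ D`, then for some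
`ε₀ ∈ (0, min(e^{-e}, d₀))` with `d₀ = sup_{z ∈ D} |z - z₀|`,
`∫_{ε<|z-z₀|<ε₀} φ(z) / (|z-z₀| log(1/|z-z₀|))² dm(z) = O(log log (1/ε))` as `ε → 0`. -/
theorem fmo_integral_estimate
    (D : Set ℂ) (hD : IsOpen D) (hDconn : IsConnected D)
    (φ : ℂ → ℝ) (hφpos : ∀ z ∈ D, 0 ≤ φ z)
    (z₀ : ℂ) (hz₀ : z₀ ∈ D)
    (hint : ∃ r > 0, IntegrableOn φ (ball z₀ r) volume)
    (hfmo : FMOAt φ z₀) :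
    ∃ ε₀ : ℝ, 0 < ε₀ ∧
      ENNReal.ofReal ε₀ <
        min (ENNReal.ofReal (Real.exp (-Real.exp 1))) (⨆ z ∈ D, edist z z₀) ∧
      ∃ C : ℝ, ∀ᶠ ε in 𝓝[>] (0 : ℝ),
        (∫⁻ z in D ∩ {z : ℂ | ε < dist z z₀ ∧ dist z z₀ < ε₀},
            ENNReal.ofReal (φ z / (dist z z₀ * Real.log (1 / dist z z₀)) ^ 2)
            ∂volume)
          ≤ ENNReal.ofReal (C * Real.log (Real.log (1 / ε))) :=
  fmo_integral_estimate_general D hD φ hφpos z₀ hz₀ hint hfmo
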